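/- There is no pair (λ, ν) ∈ [0,∞)⁴ × [0,∞)⁴ with λ_{j₀} ≠ λ_{j₀+2} for some j₀ ∈ {0,1} satisfying the system: for every j ∈ {0,1,2,3} (indices taken modulo 4), −λ_j·log(λ_j) + (9/10)·λ_j − (2/5)·(λ_{j+1} + λ_{j+3}) − (1/10)·λ_{j+2} − ν_j = 0; 0 < ∑_{k=0}^{3} λ_k² < 4; and λ_j·ν_j = 0 for every j ∈ {0,1,2,3}. -/

import Mathlib

/-!
Write `g x = x * (1 - log x)`. A vanishing `λ_j` would force its three neighbours to vanish, so
all `λ_j` are positive, the multipliers vanish, and the system reads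
`g λ_j = 2/5 (λ_{j+1} + λ_{j+3}) + (λ_j + λ_{j+2}) / 10`; in particular `g λ_0 = g λ_2` and
`g λ_1 = g λ_3`. The function `g` lies below its tangents and has maximum `g 1 = 1`, so two
different points with the same value of `g` have sum `> 2`. If both opposite pairs are unequal,
the equation for `λ_1` then gives `g λ_1 > 1`.

If only `λ_0 ≠ λ_2`, with `λ_1 = λ_3 = b`, the first-order information is not enough. Truncated
series for `log` give `g (1 - s) ≤ g (1 + s + s²/3 + s³/9)`, hence
`λ_0 + λ_2 - 2 ≥ 2p/3 - 25p²/12` with `p = 1 - g λ_0`, whereas the equation for `b` together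
with `g b ≤ 1 - (1 - b)²/2` forces `λ_0 + λ_2 - 2 < 2p/3 - 25p²/12`.
-/

open Real Finset

section LogSeries

variable {x : ℝ}

theorem sum_range_pow_div_le_neg_log_one_sub (n : ℕ) (h0 : 0 ≤ x) (h1 : x < 1) :
    ∑ i ∈ range n, x ^ (i + 1) / (i + 1) ≤ -log (1 - x) :=
  sum_le_hasSum (range n) (fun i _ => by positivity)
    (hasSum_pow_div_log_of_abs_lt_one (by rwa [abs_of_nonneg h0]))

theorem neg_log_one_sub_le_sum_range_add (n : ℕ) (h0 : 0 ≤ x) (h1 : x < 1) :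
    -log (1 - x) ≤
      ∑ i ∈ range n, x ^ (i + 1) / (i + 1) + x ^ (n + 1) / ((n + 1) * (1 - x)) := by
  have hs := hasSum_pow_div_log_of_abs_lt_one (by rwa [abs_of_nonneg h0] : |x| < 1)
  have hgeom : HasSum (fun i : ℕ ↦ x ^ (n + 1) / (n + 1) * x ^ i)
      (x ^ (n + 1) / ((n + 1) * (1 - x))) := by
    simpa only [← div_eq_mul_inv, div_div] using
      (hasSum_geometric_of_lt_one h0 h1).mul_left (x ^ (n + 1) / (n + 1))
  rw [← hs.tsum_eq, ← hs.summable.sum_add_tsum_nat_add n, ← hgeom.tsum_eq]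
  refine add_le_add_right (Summable.tsum_le_tsum (fun i ↦ ?_)
    ((summable_nat_add_iff n).2 hs.summable) hgeom.summable) _
  rw [div_mul_eq_mul_div, ← pow_add, show n + 1 + i = i + n + 1 by ring]
  gcongr
  linarith [(i.cast_nonneg : (0 : ℝ) ≤ i)]

theorem log_one_add_le_sum_range_add (n : ℕ) (hx : 0 ≤ x) :
    log (1 + x) ≤
      ∑ i ∈ range n, (x / (1 + x)) ^ (i + 1) / (i + 1) + x ^ (n + 1) / ((n + 1) * (1 + x) ^ n) := by
  have hx1 : 0 < 1 + x := by linarith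
  have h := neg_log_one_sub_le_sum_range_add n (div_nonneg hx hx1.le)
    ((div_lt_one hx1).2 (by linarith))
  rw [show 1 - x / (1 + x) = (1 + x)⁻¹ by field_simp; ring, log_inv, neg_neg] at h
  convert h using 2
  rw [div_pow]
  field_simp
  ring

end LogSeries

noncomputable def mulOneSubLog (x : ℝ) : ℝ := x * (1 - log x)

section MulOneSubLog

variable {x y : ℝ}

theorem mulOneSubLog_lt_add_sub_mul_log (hx : 0 < x) (hy : 0 < y) (hxy : x ≠ y) :
    mulOneSubLog x < mulOneSubLog y + (y - x) * log y := by
  have h := log_lt_sub_one_of_pos (div_pos hy hx) (by rwa [Ne, div_eq_one_iff_eq hx.ne', eq_comm])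
  rw [log_div hy.ne' hx.ne'] at h
  have hxy' : x * (y / x) = y := mul_div_cancel₀ y hx.ne'
  unfold mulOneSubLog
  nlinarith [mul_lt_mul_of_pos_left h hx]

theorem mulOneSubLog_le_one (hx : 0 < x) : mulOneSubLog x ≤ 1 := by
  rcases eq_or_ne x 1 with rfl | h
  · simp [mulOneSubLog]
  · simpa [mulOneSubLog] using (mulOneSubLog_lt_add_sub_mul_log hx one_pos h).le

theorem strictMonoOn_mulOneSubLog : StrictMonoOn mulOneSubLog (Set.Ioc 0 1) := by
  intro x hx y hy hxy
  have := mulOneSubLog_lt_add_sub_mul_log hx.1 hy.1 hxy.ne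
  nlinarith [mul_nonpos_of_nonneg_of_nonpos (sub_nonneg.2 hxy.le) (log_nonpos hy.1.le hy.2)]

theorem strictAntiOn_mulOneSubLog : StrictAntiOn mulOneSubLog (Set.Ici 1) := by
  intro x hx y hy hxy
  have := mulOneSubLog_lt_add_sub_mul_log (by linarith [hy.out]) (by linarith [hx.out]) hxy.ne'
  nlinarith [mul_nonpos_of_nonpos_of_nonneg (sub_nonpos.2 hxy.le) (log_nonneg hx.out)]

theorem mulOneSubLog_le_one_sub_sq (h0 : 0 < x) (h1 : x ≤ 1) :
    mulOneSubLog x ≤ 1 - (1 - x) ^ 2 / 2 := by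
  have h := neg_log_one_sub_le_sum_range_add 1 (x := 1 - x) (by linarith) (by linarith)
  norm_num [sum_range_one] at h
  have hx : x * ((1 - x) ^ 2 / (2 * x)) = (1 - x) ^ 2 / 2 := by field_simp
  unfold mulOneSubLog
  nlinarith [mul_le_mul_of_nonneg_left h h0.le]

theorem one_sub_taylor_le_mulOneSubLog (h0 : 0 < x) (h1 : x ≤ 1) :
    1 - (1 - x) ^ 2 / 2 - (1 - x) ^ 3 / 6 - (1 - x) ^ 4 / 3 ≤ mulOneSubLog x := by
  have h := sum_range_pow_div_le_neg_log_one_sub 3 (x := 1 - x) (by linarith) (by linarith)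
  norm_num [sum_range_succ] at h
  unfold mulOneSubLog
  nlinarith [mul_le_mul_of_nonneg_left h h0.le]

end MulOneSubLog

theorem mulOneSubLog_one_sub_le {s : ℝ} (h0 : 0 ≤ s) (h1 : s < 1) :
    mulOneSubLog (1 - s) ≤ mulOneSubLog (1 + (s + s ^ 2 / 3 + s ^ 3 / 9)) := by
  set v := s + s ^ 2 / 3 + s ^ 3 / 9 with hv
  have hv0 : 0 ≤ v := by positivity
  have hs1 : 1 - s ≠ 0 := by linarith
  have hL := neg_log_one_sub_le_sum_range_add 5 h0 h1
  have hR := log_one_add_le_sum_range_add 3 hv0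
  norm_num [sum_range_succ] at hL hR
  set P := (1 + v) ^ 4 - v * (1 + v) ^ 3 - v ^ 2 * (1 + v) ^ 2 / 2 - v ^ 3 * (1 + v) / 3
      - v ^ 4 * (1 + v) / 4
      - ((1 - s) * (1 + s + s ^ 2 / 2 + s ^ 3 / 3 + s ^ 4 / 4 + s ^ 5 / 5) + s ^ 6 / 6)
        * (1 + v) ^ 3 with hP
  -- `P` is `(1 + v)³` times the gap between the two series bounds below; expanded in `s`, all
  -- its coefficients are nonnegative.
  have hP0 : 0 ≤ P := by
    lift s to NNReal using h0
    simp only [hP, hv]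
    ring_nf
    positivity
  unfold mulOneSubLog
  calc (1 - s) * (1 - log (1 - s))
      ≤ (1 - s) * (1 + (s + s ^ 2 / 2 + s ^ 3 / 3 + s ^ 4 / 4 + s ^ 5 / 5
          + s ^ 6 / (6 * (1 - s)))) := by gcongr; linarith
    _ = (1 + v) * (1 - (v / (1 + v) + (v / (1 + v)) ^ 2 / 2 + (v / (1 + v)) ^ 3 / 3
          + v ^ 4 / (4 * (1 + v) ^ 3))) - P / (1 + v) ^ 3 := by
      field_simp
      ring
    _ ≤ (1 + v) * (1 - (v / (1 + v) + (v / (1 + v)) ^ 2 / 2 + (v / (1 + v)) ^ 3 / 3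
          + v ^ 4 / (4 * (1 + v) ^ 3))) := sub_le_self _ (div_nonneg hP0 (by positivity))
    _ ≤ (1 + v) * (1 - log (1 + v)) := by gcongr

theorem lt_one_and_add_le_of_mulOneSubLog_eq {a c : ℝ} (ha : 0 < a) (hac : a < c)
    (h : mulOneSubLog a = mulOneSubLog c) :
    a < 1 ∧ 2 + (1 - a) ^ 2 / 3 + (1 - a) ^ 3 / 9 ≤ a + c := by
  have ha1 : a < 1 := by
    by_contra! ha1
    exact (strictAntiOn_mulOneSubLog ha1 (ha1.trans hac.le : (1 : ℝ) ≤ c) hac).ne' h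
  have hc1 : 1 < c := by
    by_contra! hc1
    exact (strictMonoOn_mulOneSubLog ⟨ha, hac.le.trans hc1⟩ ⟨ha.trans hac, hc1⟩ hac).ne h
  refine ⟨ha1, ?_⟩
  have hmaster := mulOneSubLog_one_sub_le (s := 1 - a) (by linarith) (by linarith)
  rw [sub_sub_cancel] at hmaster
  have hc : 1 + ((1 - a) + (1 - a) ^ 2 / 3 + (1 - a) ^ 3 / 9) ≤ c := by
    by_contra! hlt
    linarith [strictAntiOn_mulOneSubLog hc1.le (hc1.le.trans hlt.le : (1 : ℝ) ≤ _) hlt]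
  linarith

theorem two_lt_add_of_mulOneSubLog_eq {a c : ℝ} (ha : 0 < a) (hc : 0 < c) (hne : a ≠ c)
    (h : mulOneSubLog a = mulOneSubLog c) : 2 < a + c := by
  wlog hac : a < c generalizing a c
  · exact add_comm a c ▸ this hc ha hne.symm h.symm (hne.lt_or_gt.resolve_left hac)
  obtain ⟨ha1, hsum⟩ := lt_one_and_add_le_of_mulOneSubLog_eq ha hac h
  have : 0 < 1 - a := by linarith
  nlinarith [pow_pos this 2, pow_pos this 3]

theorem false_of_mulOneSubLog_eq_of_opposite_eq {a b c : ℝ} (ha : 0 < a) (hb : 0 < b)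
    (hac : a < c) (h : mulOneSubLog a = mulOneSubLog c)
    (ha_eq : mulOneSubLog a = 4 / 5 * b + 1 / 10 * (a + c))
    (hb_eq : mulOneSubLog b = 2 / 5 * (a + c) + 1 / 5 * b) : False := by
  obtain ⟨ha1, hsum⟩ := lt_one_and_add_le_of_mulOneSubLog_eq ha hac h
  set s := 1 - a
  set p := 1 - mulOneSubLog a
  set t := a + c - 2
  have hs0 : 0 < s := by linarith
  have hp_lower : s ^ 2 / 2 ≤ p := by linarith [mulOneSubLog_le_one_sub_sq ha ha1.le]
  have hp_upper : p ≤ s ^ 2 / 2 + s ^ 3 / 6 + s ^ 4 / 3 := by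
    linarith [one_sub_taylor_le_mulOneSubLog ha ha1.le]
  have hp0 : 0 < p := by nlinarith [pow_pos hs0 2]
  have ht_pos : 0 < t := by nlinarith [pow_pos hs0 2, pow_pos hs0 3]
  have ht_lower : 2 / 3 * p - 25 / 12 * p ^ 2 ≤ t := by
    nlinarith [pow_pos hs0 3, pow_pos hs0 4, mul_le_mul hp_lower hp_lower (by positivity) hp0.le]
  have hb1 : 1 - b = 5 / 4 * p + t / 8 := by linarith
  have hb_le := mulOneSubLog_le_one_sub_sq hb (by linarith)
  nlinarith [mul_pos hp0 ht_pos]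

theorem opposite_eq_of_mulOneSubLog_system {a b c d : ℝ}
    (ha : 0 < a) (hb : 0 < b) (hc : 0 < c) (hd : 0 < d)
    (h₀ : mulOneSubLog a = 2 / 5 * (b + d) + 1 / 10 * c + 1 / 10 * a)
    (h₁ : mulOneSubLog b = 2 / 5 * (c + a) + 1 / 10 * d + 1 / 10 * b)
    (h₂ : mulOneSubLog c = 2 / 5 * (d + b) + 1 / 10 * a + 1 / 10 * c)
    (h₃ : mulOneSubLog d = 2 / 5 * (a + c) + 1 / 10 * b + 1 / 10 * d) : a = c := by
  by_contra! hac
  have hac_g : mulOneSubLog a = mulOneSubLog c := by linear_combination h₀ - h₂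
  by_cases hbd : b = d
  · subst hbd
    rcases hac.lt_or_gt with hlt | hgt
    · exact false_of_mulOneSubLog_eq_of_opposite_eq ha hb hlt hac_g
        (by linear_combination h₀) (by linear_combination h₁)
    · exact false_of_mulOneSubLog_eq_of_opposite_eq hc hb hgt hac_g.symm
        (by linear_combination h₂) (by linear_combination h₁)
  · have hbd_g : mulOneSubLog b = mulOneSubLog d := by linear_combination h₁ - h₃
    linarith [two_lt_add_of_mulOneSubLog_eq ha hc hac hac_g,
      two_lt_add_of_mulOneSubLog_eq hb hd hbd hbd_g, mulOneSubLog_le_one hb]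

theorem pos_of_kkt_Z4 {l ν : ZMod 4 → ℝ} (hl : ∀ j, 0 ≤ l j) (hν : ∀ j, 0 ≤ ν j)
    (hkkt : ∀ j : ZMod 4,
      -(l j * log (l j)) + (9/10 : ℝ) * l j
        - (2/5 : ℝ) * (l (j+1) + l (j+3)) - (1/10 : ℝ) * l (j+2) - ν j = 0)
    {k : ZMod 4} (hk : l k ≠ 0) (j : ZMod 4) : 0 < l j := by
  refine (hl j).lt_of_ne fun hj ↦ hk ?_
  have h := hkkt j
  rw [← hj, zero_mul, neg_zero] at h
  have h₁ := hl (j + 1)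
  have h₂ := hl (j + 2)
  have h₃ := hl (j + 3)
  have h₄ := hν j
  obtain ⟨m, rfl⟩ : ∃ m, k = j + m := ⟨k - j, by ring⟩
  obtain rfl | rfl | rfl | rfl :=
    (by decide : ∀ m : ZMod 4, m = 0 ∨ m = 1 ∨ m = 2 ∨ m = 3) m
  · rw [add_zero]; exact hj.symm
  all_goals linarith

theorem kkt_Z4_opposite_unequal :
    ¬ ∃ (l ν : ZMod 4 → ℝ),
      (∀ j, 0 ≤ l j) ∧ (∀ j, 0 ≤ ν j) ∧
      (l 0 ≠ l 2 ∨ l 1 ≠ l 3) ∧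
      (∀ j : ZMod 4,
        -(l j * Real.log (l j)) + (9/10 : ℝ) * l j
          - (2/5 : ℝ) * (l (j+1) + l (j+3)) - (1/10 : ℝ) * l (j+2) - ν j = 0) ∧
      (0 < ∑ k : ZMod 4, l k ^ 2) ∧ ((∑ k : ZMod 4, l k ^ 2) < 4) ∧
      (∀ j, l j * ν j = 0) := by
  rintro ⟨l, ν, hl, hν, hne, hkkt, hsq, -, hslack⟩
  obtain ⟨k, -, hk⟩ := exists_ne_zero_of_sum_ne_zero hsq.ne'
  have hpos := pos_of_kkt_Z4 hl hν hkkt (ne_zero_pow two_ne_zero hk)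
  have hsys : ∀ j, mulOneSubLog (l j)
      = 2 / 5 * (l (j + 1) + l (j + 3)) + 1 / 10 * l (j + 2) + 1 / 10 * l j := by
    intro j
    have hνj : ν j = 0 := (mul_eq_zero.1 (hslack j)).resolve_left (hpos j).ne'
    unfold mulOneSubLog
    linear_combination hkkt j + hνj
  have h02 := opposite_eq_of_mulOneSubLog_system (hpos 0) (hpos 1) (hpos 2) (hpos 3)
    (hsys 0) (hsys 1) (hsys 2) (hsys 3)
  have h13 := opposite_eq_of_mulOneSubLog_system (hpos 1) (hpos 2) (hpos 3) (hpos 0)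
    (hsys 1) (hsys 2) (hsys 3) (hsys 0)
  exact hne.elim (· h02) (· h13)
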